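/- arXiv:1708.08439 — 3 statements merged into one kernel-verified Lean document; each statement's English description precedes it below -/
import Mathlib

section
/- Let G be a simple graph, v a vertex of G, and x, y two distinct neighbors of v such that x and y have exactly c common neighbors other than v. Then the graph G′ obtained from G by deleting v and y and adding edges from x to every vertex in N(y) − N(x) − {x, v} satisfies |E(G′)| = |E(G)| − deg(v) − c, and G′ is a minor of G. -/
open SimpleGraph

/-- `G.HasMinor H` : `H` is isomorphic to a minor of `G`, expressed via branch sets. -/
def SimpleGraph.HasMinor {V : Type*} {W : Type*} (G : SimpleGraph V) (H : SimpleGraph W) :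
    Prop :=
  ∃ f : W → Set V,
    (∀ w, (f w).Nonempty) ∧
    (∀ w, (G.induce (f w)).Connected) ∧
    (∀ w₁ w₂, w₁ ≠ w₂ → Disjoint (f w₁) (f w₂)) ∧
    (∀ w₁ w₂, H.Adj w₁ w₂ → ∃ v₁ ∈ f w₁, ∃ v₂ ∈ f w₂, G.Adj v₁ v₂)

/-!
Contract the path `x v y` onto `x`: the branch set of `x` is `{x, v, y}`, every other vertex of
`G'` is its own branch set, and an edge `x q` of `G'` that is not in `G` comes from the edge `y q`.
For the count, the edges of `G'` are those of `G - v - y`, of which there are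
`|E(G)| - deg v - deg y + 1` (the edge `vy` is removed once), together with one edge `x q` for each
`q ∈ N(y) - N(x) - {v}`, of which there are `deg y - 1 - c` since `x ∉ N(y)`.
-/

namespace SimpleGraph

variable {V : Type*} (G : SimpleGraph V)

section Counting

variable [Fintype V] [DecidableRel G.Adj]

theorem ncard_neighborSet (v : V) : (G.neighborSet v).ncard = G.degree v := by
  rw [Set.ncard_eq_toFinset_card', Set.toFinset_card, card_neighborSet_eq_degree]

theorem ncard_newNeighbors_add_ncard_commonNeighbors {v x y : V} (hvy : G.Adj v y)
    (hxy : ¬ G.Adj x y) :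
    {q | q ∈ G.neighborSet y ∧ q ∉ G.neighborSet x ∧ q ≠ x ∧ q ≠ v}.ncard +
      ((G.neighborSet x ∩ G.neighborSet y) \ {v}).ncard + 1 = G.degree y := by
  have hnew : {q | q ∈ G.neighborSet y ∧ q ∉ G.neighborSet x ∧ q ≠ x ∧ q ≠ v} =
      (G.neighborSet y \ {v}) \ G.neighborSet x := by
    ext q
    simp only [mem_neighborSet, Set.mem_ofPred_eq, Set.mem_sdiff, Set.mem_singleton_iff]
    constructor
    · rintro ⟨hyq, hxq, -, hqv⟩
      exact ⟨⟨hyq, hqv⟩, hxq⟩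
    · rintro ⟨⟨hyq, hqv⟩, hxq⟩
      exact ⟨hyq, hxq, by rintro rfl; exact hxy hyq.symm, hqv⟩
  have hcommon : (G.neighborSet y \ {v}) ∩ G.neighborSet x =
      (G.neighborSet x ∩ G.neighborSet y) \ {v} := by
    ext q
    simp only [Set.mem_inter_iff, Set.mem_sdiff, Set.mem_singleton_iff]
    tauto
  have hsplit := Set.ncard_inter_add_ncard_sdiff_eq_ncard (G.neighborSet y \ {v})
    (G.neighborSet x) (Set.toFinite _)
  rw [hcommon] at hsplit
  rw [hnew, ← ncard_neighborSet, ← Set.ncard_sdiff_singleton_add_one (show v ∈ G.neighborSet y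
    from hvy.symm) (Set.toFinite _)]
  omega

variable [DecidableEq V]

theorem ncard_incidenceSet (v : V) : (G.incidenceSet v).ncard = G.degree v := by
  rw [Set.ncard_eq_toFinset_card', Set.toFinset_card, card_incidenceSet_eq_degree]

theorem ncard_edgeSet_avoiding_add_degree_add_degree {v y : V} (hvy : G.Adj v y) :
    {e ∈ G.edgeSet | ∀ a ∈ e, a ≠ v ∧ a ≠ y}.ncard + G.degree v + G.degree y =
      G.edgeSet.ncard + 1 := by
  have hdiff : {e ∈ G.edgeSet | ∀ a ∈ e, a ≠ v ∧ a ≠ y} =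
      G.edgeSet \ (G.incidenceSet v ∪ G.incidenceSet y) := by
    ext e
    simp only [incidenceSet, Set.mem_ofPred_eq, Set.mem_sdiff, Set.mem_union]
    constructor
    · rintro ⟨he, hav⟩
      exact ⟨he, by rintro (⟨-, hv⟩ | ⟨-, hy⟩); exacts [(hav v hv).1 rfl, (hav y hy).2 rfl]⟩
    · rintro ⟨he, hvy⟩
      exact ⟨he, fun a ha => ⟨by rintro rfl; exact hvy (.inl ⟨he, ha⟩),
        by rintro rfl; exact hvy (.inr ⟨he, ha⟩)⟩⟩
  have hunion := Set.ncard_union_add_ncard_inter (G.incidenceSet v) (G.incidenceSet y)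
  rw [G.incidenceSet_inter_incidenceSet_of_adj hvy, Set.ncard_singleton, ncard_incidenceSet,
    ncard_incidenceSet] at hunion
  have hsplit := Set.ncard_sdiff_add_ncard_of_subset
    (Set.union_subset (G.incidenceSet_subset v) (G.incidenceSet_subset y)) (Set.toFinite _)
  rw [hdiff]
  omega

end Counting

def induceAddEdgesFrom (s : Set V) (x : V) (N : Set V) : SimpleGraph s :=
  fromRel fun p q => G.Adj p q ∨ p.1 = x ∧ q.1 ∈ N

theorem image_val_edgeSet_induceAddEdgesFrom {s : Set V} {x : V} {N : Set V} (hxs : x ∈ s)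
    (hN : N ⊆ s) (hxN : x ∉ N) :
    Sym2.map Subtype.val '' (G.induceAddEdgesFrom s x N).edgeSet =
      {e ∈ G.edgeSet | ∀ a ∈ e, a ∈ s} ∪ (fun q => s(x, q)) '' N := by
  apply Set.Subset.antisymm
  · rintro _ ⟨e, he, rfl⟩
    induction e using Sym2.ind with
    | _ p q =>
      rw [mem_edgeSet, induceAddEdgesFrom, fromRel_adj] at he
      rw [Sym2.map_mk]
      have hpq : ∀ a ∈ s(p.1, q.1), a ∈ s := by
        rintro a ha
        rcases Sym2.mem_iff.1 ha with rfl | rfl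
        exacts [p.2, q.2]
      obtain ⟨-, (hadj | ⟨hp, hq⟩) | (hadj | ⟨hq, hp⟩)⟩ := he
      · exact .inl ⟨hadj, hpq⟩
      · exact .inr ⟨q, hq, by rw [hp]⟩
      · exact .inl ⟨hadj.symm, hpq⟩
      · exact .inr ⟨p, hp, by rw [hq, Sym2.eq_swap]⟩
  · rintro e (⟨he, hes⟩ | ⟨q, hq, rfl⟩)
    · induction e using Sym2.ind with
      | _ a b =>
        refine ⟨s(⟨a, hes a (Sym2.mem_mk_left a b)⟩, ⟨b, hes b (Sym2.mem_mk_right a b)⟩), ?_,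
          Sym2.map_mk _ _ _⟩
        rw [mem_edgeSet, induceAddEdgesFrom, fromRel_adj]
        exact ⟨fun h => he.ne (congrArg Subtype.val h), .inl (.inl he)⟩
    · refine ⟨s(⟨x, hxs⟩, ⟨q, hN hq⟩), ?_, Sym2.map_mk _ _ _⟩
      rw [mem_edgeSet, induceAddEdgesFrom, fromRel_adj]
      exact ⟨fun h => hxN (Subtype.mk.inj h ▸ hq), .inl (.inr ⟨rfl, hq⟩)⟩

theorem ncard_edgeSet_induceAddEdgesFrom [Finite V] {s : Set V} {x : V} {N : Set V}
    (hxs : x ∈ s) (hN : N ⊆ s) (hxN : x ∉ N) (hNx : Disjoint N (G.neighborSet x)) :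
    (G.induceAddEdgesFrom s x N).edgeSet.ncard =
      {e ∈ G.edgeSet | ∀ a ∈ e, a ∈ s}.ncard + N.ncard := by
  have hdisj : Disjoint {e ∈ G.edgeSet | ∀ a ∈ e, a ∈ s} ((fun q => s(x, q)) '' N) := by
    rw [Set.disjoint_left]
    rintro _ ⟨he, -⟩ ⟨q, hq, rfl⟩
    exact Set.disjoint_left.1 hNx hq he
  rw [← Set.ncard_image_of_injective _ (Sym2.map.injective Subtype.val_injective),
    G.image_val_edgeSet_induceAddEdgesFrom hxs hN hxN, Set.ncard_union_eq hdisj,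
    Set.ncard_image_of_injective _ fun _ _ => Sym2.congr_right.1]

/-- Contracting a connected set `B` onto its vertex `x` and deleting the rest of `B`. -/
theorem hasMinor_of_contract {s : Set V} (H : SimpleGraph s) {x : s} {B : Set V}
    (hxB : x.1 ∈ B) (hB : (G.induce B).Connected) (hBs : ∀ u : s, u.1 ∈ B → u = x)
    (hH : ∀ p q, H.Adj p q → p ≠ x → q ≠ x → G.Adj p q)
    (hHx : ∀ q, H.Adj x q → ∃ b ∈ B, G.Adj b q) :
    G.HasMinor H := by
  classical
  set f : s → Set V := fun w => if w = x then B else {w.1}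
  have hfx : f x = B := if_pos rfl
  have hf_ne {w : s} (hw : w ≠ x) : f w = {w.1} := if_neg hw
  have hmem (w : s) : w.1 ∈ f w := by
    by_cases hw : w = x
    · rw [hw, hfx]; exact hxB
    · rw [hf_ne hw]; rfl
  refine ⟨f, fun w => ⟨w.1, hmem w⟩, fun w => ?_, fun w₁ w₂ hne => ?_, fun p q hpq => ?_⟩
  · by_cases hw : w = x
    · rwa [hw, hfx]
    · rw [hf_ne hw, induce_singleton_eq_top]
      exact connected_top
  · have hsep {w : s} (hw : w ≠ x) : Disjoint B (f w) := by
      rw [hf_ne hw, Set.disjoint_singleton_right]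
      exact fun h => hw (hBs w h)
    by_cases h₁ : w₁ = x
    · subst h₁; rw [hfx]; exact hsep hne.symm
    by_cases h₂ : w₂ = x
    · subst h₂; rw [hfx]; exact (hsep hne).symm
    rw [hf_ne h₁, hf_ne h₂, Set.disjoint_singleton]
    exact fun h => hne (Subtype.ext h)
  · by_cases hp : p = x
    · subst hp
      obtain ⟨b, hb, hbq⟩ := hHx q hpq
      exact ⟨b, hfx ▸ hb, q, hmem q, hbq⟩
    by_cases hq : q = x
    · subst hq
      obtain ⟨b, hb, hbp⟩ := hHx p hpq.symm
      exact ⟨p, hmem p, b, hfx ▸ hb, hbp.symm⟩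
    exact ⟨p, hmem p, q, hmem q, hH p q hpq hp hq⟩

theorem hasMinor_induceAddEdgesFrom_of_adj_of_adj {v x y : V} (hvx : G.Adj v x)
    (hvy : G.Adj v y) (hxy : x ≠ y) {N : Set V} (hN : N ⊆ G.neighborSet y) :
    G.HasMinor (G.induceAddEdgesFrom {u | u ≠ v ∧ u ≠ y} x N) := by
  refine G.hasMinor_of_contract _ (x := ⟨x, hvx.ne', hxy⟩) (B := {x, v} ∪ {v, y}) (by simp)
    (induce_union_connected (induce_pair_connected_of_adj hvx.symm).preconnected
      (induce_pair_connected_of_adj hvy).preconnected ⟨v, by simp⟩)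
    (fun u hu => ?_) (fun p q hpq hp hq => ?_) (fun q hq => ?_)
  · obtain ⟨u, huv, huy⟩ := u
    simp only [Set.mem_union, Set.mem_insert_iff, Set.mem_singleton_iff] at hu
    exact Subtype.ext (by tauto)
  · rw [induceAddEdgesFrom, fromRel_adj] at hpq
    obtain ⟨-, (h | ⟨hpx, -⟩) | (h | ⟨hqx, -⟩)⟩ := hpq
    exacts [h, absurd (Subtype.ext hpx) hp, h.symm, absurd (Subtype.ext hqx) hq]
  · rw [induceAddEdgesFrom, fromRel_adj] at hq
    obtain ⟨hne, (h | ⟨-, hyq⟩) | (h | ⟨hqx, -⟩)⟩ := hq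
    exacts [⟨x, by simp, h⟩, ⟨y, by simp, hN hyq⟩, ⟨x, by simp, h.symm⟩,
      absurd (Subtype.ext hqx).symm hne]

end SimpleGraph

theorem contract_two_neighbors {V : Type*} [Fintype V] [DecidableEq V]
    (G : SimpleGraph V) [DecidableRel G.Adj]
    (v x y : V) (hvx : G.Adj v x) (hvy : G.Adj v y) (hxy : x ≠ y)
    -- `x` and `y` are two neighbors of `v` (in the intended bipartite application they are
    -- nonadjacent, which is needed for the exact edge count):
    (hnadj : ¬ G.Adj x y)
    (c : ℕ) (hc : c = ((G.neighborSet x ∩ G.neighborSet y) \ {v}).ncard)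
    (G' : SimpleGraph {u : V // u ≠ v ∧ u ≠ y})
    (hG' : G' = SimpleGraph.fromRel (fun p q =>
      G.Adj p.1 q.1 ∨
      (p.1 = x ∧ q.1 ∈ G.neighborSet y ∧ q.1 ∉ G.neighborSet x ∧ q.1 ≠ x ∧ q.1 ≠ v))) :
    (G'.edgeSet.ncard : ℤ) = (G.edgeSet.ncard : ℤ) - G.degree v - c ∧
      G.HasMinor G' := by
  subst hc
  have hrest := G.ncard_edgeSet_avoiding_add_degree_add_degree hvy
  have hnew := G.ncard_newNeighbors_add_ncard_commonNeighbors hvy hnadj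
  set N : Set V := {q | q ∈ G.neighborSet y ∧ q ∉ G.neighborSet x ∧ q ≠ x ∧ q ≠ v}
  have hG'def : G' = G.induceAddEdgesFrom {u | u ≠ v ∧ u ≠ y} x N := hG'
  have hG'card :
      G'.edgeSet.ncard = {e ∈ G.edgeSet | ∀ a ∈ e, a ≠ v ∧ a ≠ y}.ncard + N.ncard := by
    rw [hG'def]
    exact G.ncard_edgeSet_induceAddEdgesFrom ⟨hvx.ne', hxy⟩
      (fun q hq => ⟨hq.2.2.2, hq.1.ne'⟩) (fun h => h.2.2.1 rfl)
      (Set.disjoint_left.2 fun _ hq => hq.2.1)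
  refine ⟨by omega, ?_⟩
  rw [hG'def]
  exact G.hasMinor_induceAddEdgesFrom_of_adj_of_adj hvx hvy hxy fun _ hq => hq.1
end

section
/- Let G be a bipartite graph with bipartition (X₀, X₁) and suppose G − v is isomorphic to K_{3,n−4} with the part of size 3 contained in X₀, where v ∈ X₀ has degree 3 and there exists u ∈ X₁ not adjacent to v. Then the induced subgraph of G on X₀ ∪ {u} ∪ N(v) is isomorphic to K_{4,4} minus an edge. -/
/-!
Deleting `v` leaves `K_{3,n-4}` with its small side `A` inside `X₀`, so `X₀ = {v} ∪ A` and every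
vertex of `X₁` is adjacent to all of `A`. Thus `X₀` and `T = {u} ∪ N(v) ⊆ X₁` are two sets of four
vertices in which every cross pair is adjacent except `v, u`, and such an induced subgraph of a
bipartite graph is `K_{4,4}` minus an edge.
-/

open SimpleGraph

/-- `K_{4,4}` minus an edge. -/
def K44minus : SimpleGraph (Fin 4 ⊕ Fin 4) :=
  (completeBipartiteGraph (Fin 4) (Fin 4)).deleteEdges {s(Sum.inl 0, Sum.inr 0)}

theorem Finite.exists_equiv_fin_apply_eq_zero {α : Type*} [Finite α] {n : ℕ}
    (h : Nat.card α = n + 1) (x : α) : ∃ e : α ≃ Fin (n + 1), e x = 0 :=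
  let e := Finite.equivFinOfCardEq h
  ⟨e.trans (Equiv.swap (e x) 0), by simp⟩

namespace SimpleGraph

variable {V α β : Type*} {G : SimpleGraph V} {X Y : Set V}

theorem IsBipartiteWith.not_adj_of_mem_left (hG : G.IsBipartiteWith X Y) {x y : V}
    (hx : x ∈ X) (hy : y ∈ X) : ¬G.Adj x y := fun h =>
  Set.disjoint_left.mp hG.disjoint hy (hG.mem_of_mem_adj hx h)

theorem IsBipartiteWith.not_adj_of_mem_right (hG : G.IsBipartiteWith X Y) {x y : V}
    (hx : x ∈ Y) (hy : y ∈ Y) : ¬G.Adj x y :=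
  hG.symm.not_adj_of_mem_left hx hy

theorem IsBipartiteWith.nonempty_induce_union_iso {s t : Set V} (hG : G.IsBipartiteWith X Y)
    (hs : s ⊆ X) (ht : t ⊆ Y) (es : s ≃ α) (et : t ≃ β) (p : s) (q : t)
    (hadj : ∀ (x : s) (y : t), G.Adj x y ↔ ¬(x = p ∧ y = q)) :
    Nonempty (G.induce (s ∪ t) ≃g
      (completeBipartiteGraph α β).deleteEdges {s(Sum.inl (es p), Sum.inr (et q))}) := by
  classical
  let f : α ⊕ β ≃ ↥(s ∪ t) :=
    (es.sumCongr et).symm.trans (Equiv.Set.union (hG.disjoint.mono hs ht)).symm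
  refine ⟨Iso.symm ⟨f, ?_⟩⟩
  rintro (a | b) (a' | b')
  · simpa [f] using hG.not_adj_of_mem_left (hs (es.symm a).2) (hs (es.symm a').2)
  · simpa [f, Sym2.eq_iff, ← Equiv.symm_apply_eq] using hadj (es.symm a) (et.symm b')
  · simpa [f, Sym2.eq_iff, ← Equiv.symm_apply_eq, G.adj_comm, and_comm] using
      hadj (es.symm a') (et.symm b)
  · simpa [f] using hG.not_adj_of_mem_right (ht (et.symm b).2) (ht (et.symm b').2)

namespace Iso

section

variable {s : Set V} (e : G.induce s ≃g completeBipartiteGraph α β)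

theorem adj_symm_inl_symm_inr (a : α) (b : β) :
    G.Adj (e.symm (Sum.inl a)) (e.symm (Sum.inr b)) :=
  e.symm.map_adj_iff.mpr (by simp)

theorem exists_symm_inl_eq_of_mem_left [Nonempty α] (hG : G.IsBipartiteWith X Y)
    (hpart : ∀ a, (e.symm (Sum.inl a) : V) ∈ X) (w : s) (hw : (w : V) ∈ X) :
    ∃ a, e.symm (Sum.inl a) = w := by
  rcases hew : e w with a | b
  · exact ⟨a, by rw [← hew, e.symm_apply_apply]⟩
  · have hadj := e.adj_symm_inl_symm_inr (Classical.arbitrary α) b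
    rw [← hew, e.symm_apply_apply] at hadj
    exact absurd hadj (hG.not_adj_of_mem_left (hpart _) hw)

theorem adj_symm_inl_of_mem_right (hG : G.IsBipartiteWith X Y)
    (hpart : ∀ a, (e.symm (Sum.inl a) : V) ∈ X) (w : s) (hw : (w : V) ∈ Y) (a : α) :
    G.Adj (e.symm (Sum.inl a)) w := by
  rcases hew : e w with a' | b
  · have hwX : (w : V) ∈ X := by rw [← e.symm_apply_apply w, hew]; exact hpart a'
    exact absurd hw (Set.disjoint_left.mp hG.disjoint hwX)
  · simpa [← hew] using e.adj_symm_inl_symm_inr a b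

end

section

variable {v : V} (e : G.induce {w | w ≠ v} ≃g completeBipartiteGraph α β)

theorem left_eq_insert_range_symm_inl [Nonempty α] (hG : G.IsBipartiteWith X Y)
    (hpart : ∀ a, (e.symm (Sum.inl a) : V) ∈ X) (hv : v ∈ X) :
    X = insert v (Set.range fun a => (e.symm (Sum.inl a) : V)) := by
  ext w
  constructor
  · intro hw
    by_cases hwv : w = v
    · exact Or.inl hwv
    · obtain ⟨a, ha⟩ := e.exists_symm_inl_eq_of_mem_left hG hpart ⟨w, hwv⟩ hw
      exact Or.inr ⟨a, congrArg Subtype.val ha⟩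
  · rintro (rfl | ⟨a, rfl⟩)
    exacts [hv, hpart a]

theorem ncard_left [Nonempty α] [Finite α] (hG : G.IsBipartiteWith X Y)
    (hpart : ∀ a, (e.symm (Sum.inl a) : V) ∈ X) (hv : v ∈ X) :
    X.ncard = Nat.card α + 1 := by
  rw [e.left_eq_insert_range_symm_inl hG hpart hv, Set.ncard_insert_of_notMem,
    Set.ncard_range_of_injective]
  · exact Subtype.val_injective.comp (e.symm.injective.comp Sum.inl_injective)
  · rintro ⟨a, ha⟩
    exact (e.symm (Sum.inl a)).2 ha

theorem adj_of_mem_left_of_mem_right [Nonempty α] (hG : G.IsBipartiteWith X Y)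
    (hpart : ∀ a, (e.symm (Sum.inl a) : V) ∈ X) (hv : v ∈ X) {x y : V} (hx : x ∈ X)
    (hxv : x ≠ v) (hy : y ∈ Y) : G.Adj x y := by
  obtain ⟨a, ha⟩ := e.exists_symm_inl_eq_of_mem_left hG hpart ⟨x, hxv⟩ hx
  have hyv : y ≠ v := fun h => Set.disjoint_left.mp hG.disjoint (h ▸ hv) hy
  simpa [ha] using e.adj_symm_inl_of_mem_right hG hpart ⟨y, hyv⟩ hy a

end

end Iso

theorem ncard_insert_neighborSet {u v : V} [Fintype (G.neighborSet v)] (huv : ¬G.Adj v u) :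
    (insert u (G.neighborSet v)).ncard = G.degree v + 1 := by
  rw [Set.ncard_insert_of_notMem (show u ∉ G.neighborSet v from huv),
    Set.ncard_eq_toFinset_card', Set.toFinset_card, card_neighborSet_eq_degree]

theorem adj_iff_ne_of_mem_insert_neighborSet {u v y : V} (huv : ¬G.Adj v u)
    (hy : y ∈ insert u (G.neighborSet v)) : G.Adj v y ↔ y ≠ u := by
  rcases hy with rfl | hy
  · simpa using huv
  · exact iff_of_true hy (ne_of_mem_of_not_mem hy huv)

end SimpleGraph

theorem K44minus_subgraph_from_K3nm4_general {V : Type*} [Fintype V] (G : SimpleGraph V)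
    [DecidableRel G.Adj] (n : ℕ)
    (X₀ X₁ : Set V) (hdisj : Disjoint X₀ X₁)
    (hbip : ∀ a b : V, G.Adj a b → (a ∈ X₀ ∧ b ∈ X₁) ∨ (a ∈ X₁ ∧ b ∈ X₀))
    (v : V) (hv0 : v ∈ X₀) (hdeg : G.degree v = 3)
    (e : G.induce {w : V | w ≠ v} ≃g completeBipartiteGraph (Fin 3) (Fin (n - 4)))
    (hpart : ∀ i : Fin 3, ((e.symm (Sum.inl i)) : V) ∈ X₀)
    (u : V) (hu1 : u ∈ X₁) (huv : ¬ G.Adj v u) :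
    Nonempty ((G.induce (X₀ ∪ {u} ∪ G.neighborSet v)) ≃g K44minus) := by
  have hG : G.IsBipartiteWith X₀ X₁ := ⟨hdisj, hbip⟩
  set T := insert u (G.neighborSet v)
  have hT : T ⊆ X₁ := Set.insert_subset hu1 (isBipartiteWith_neighborSet_subset hG hv0)
  have hcard₀ : Nat.card X₀ = 3 + 1 := by simpa using e.ncard_left hG hpart hv0
  have hcard₁ : Nat.card T = 3 + 1 := by simpa [hdeg] using ncard_insert_neighborSet huv
  obtain ⟨e₀, he₀⟩ := Finite.exists_equiv_fin_apply_eq_zero hcard₀ ⟨v, hv0⟩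
  obtain ⟨e₁, he₁⟩ := Finite.exists_equiv_fin_apply_eq_zero hcard₁ ⟨u, Set.mem_insert u _⟩
  have hadj : ∀ (x : X₀) (y : T), G.Adj x y ↔ ¬(x = ⟨v, hv0⟩ ∧ y = ⟨u, Set.mem_insert u _⟩) := by
    rintro ⟨x, hx⟩ ⟨y, hy⟩
    simp only [Subtype.mk.injEq]
    by_cases hxv : x = v
    · subst hxv
      simpa using adj_iff_ne_of_mem_insert_neighborSet huv hy
    · simpa [hxv] using e.adj_of_mem_left_of_mem_right hG hpart hv0 hx hxv (hT hy)
  have hiso := hG.nonempty_induce_union_iso subset_rfl hT e₀ e₁ _ _ hadj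
  rw [Set.union_assoc, Set.singleton_union]
  rwa [he₀, he₁] at hiso

theorem K44minus_subgraph_from_K3nm4 {V : Type*} [Fintype V] (G : SimpleGraph V)
    [DecidableRel G.Adj] (n : ℕ) (hn : n = Fintype.card V)
    (X₀ X₁ : Set V) (hdisj : Disjoint X₀ X₁) (hunion : X₀ ∪ X₁ = Set.univ)
    (hbip : ∀ a b : V, G.Adj a b → (a ∈ X₀ ∧ b ∈ X₁) ∨ (a ∈ X₁ ∧ b ∈ X₀))
    (v : V) (hv0 : v ∈ X₀) (hdeg : G.degree v = 3)
    (e : G.induce {w : V | w ≠ v} ≃g completeBipartiteGraph (Fin 3) (Fin (n - 4)))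
    (hpart : ∀ i : Fin 3, ((e.symm (Sum.inl i)) : V) ∈ X₀)
    (u : V) (hu1 : u ∈ X₁) (huv : ¬ G.Adj v u) :
    Nonempty ((G.induce (X₀ ∪ {u} ∪ G.neighborSet v)) ≃g K44minus) :=
  K44minus_subgraph_from_K3nm4_general G n X₀ X₁ hdisj hbip v hv0 hdeg e hpart u hu1 huv
end

section
/- Every graph on n ≥ 4 vertices with no minor isomorphic to K_5 has at most 3n − 6 edges. -/
open SimpleGraph

/-!
Mader's induction on `n`; there is nothing to prove for `n = p - 1`, where no graph exceeds the
bound. Pass to a subgraph with exactly one edge more than `(p - 2) n - C(p - 1, 2)`. Deleting a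
vertex of degree at most `p - 2`, or contracting an edge that lies in at most `p - 3` triangles,
loses at most `p - 2` edges, so the result is above the bound for `n - 1` vertices and has a
`K_p` minor by induction. Otherwise every edge lies in at least `p - 2` triangles, and the
average degree, which is below `2 (p - 2)`, gives a vertex `v` of degree in `(p - 2, 2 (p - 2))`
whose neighbourhood has minimum degree at least `p - 2`; a `K_{p-1}` minor of the neighbourhood
together with `v` is a `K_p` minor. For `p = 5` that neighbourhood is a `K_4`, or a graph on
five vertices with at least eight edges, which has a `K_4` minor by the case `p = 4`.
-/

open Finset

namespace SimpleGraph

variable {V W X : Type*}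

section Minor

variable {G : SimpleGraph V} {H : SimpleGraph W}

lemma induce_biUnion_connected {t : Set W} {f : W → Set V} (ht : (H.induce t).Connected)
    (hf : ∀ w ∈ t, (G.induce (f w)).Connected)
    (hadj : ∀ w₁ ∈ t, ∀ w₂ ∈ t, H.Adj w₁ w₂ → ∃ v₁ ∈ f w₁, ∃ v₂ ∈ f w₂, G.Adj v₁ v₂) :
    (G.induce (⋃ w ∈ t, f w)).Connected := by
  set U := ⋃ w ∈ t, f w
  have hsub : ∀ w ∈ t, f w ⊆ U := fun w hw => Set.subset_biUnion_of_mem hw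
  have hpiece : ∀ w (hw : w ∈ t) u (hu : u ∈ f w) v (hv : v ∈ f w),
      (G.induce U).Reachable ⟨u, hsub w hw hu⟩ ⟨v, hsub w hw hv⟩ := fun w hw u hu v hv =>
    ((hf w hw).preconnected ⟨u, hu⟩ ⟨v, hv⟩).map (induceHomOfLE G (hsub w hw)).toHom
  have hwalk : ∀ a b : t, (H.induce t).Walk a b → ∀ u (hu : u ∈ f a) v (hv : v ∈ f b),
      (G.induce U).Reachable ⟨u, hsub a a.2 hu⟩ ⟨v, hsub b b.2 hv⟩ := by
    intro a b p
    induction p with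
    | nil => exact hpiece _ (Subtype.prop _)
    | @cons a c b hac _ ih =>
      intro u hu v hv
      obtain ⟨u', hu', v', hv', huv'⟩ := hadj a a.2 c c.2 hac
      have hstep : (G.induce U).Adj ⟨u', hsub a a.2 hu'⟩ ⟨v', hsub c c.2 hv'⟩ := huv'
      exact (hpiece a a.2 u hu u' hu').trans (hstep.reachable.trans (ih v' hv' v hv))
  obtain ⟨⟨w₀, hw₀⟩⟩ := ht.nonempty
  obtain ⟨⟨u₀, hu₀⟩⟩ := (hf w₀ hw₀).nonempty
  rw [connected_iff_exists_forall_reachable]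
  refine ⟨⟨u₀, hsub w₀ hw₀ hu₀⟩, fun ⟨v, hv⟩ => ?_⟩
  obtain ⟨w, hw, hvw⟩ := Set.mem_iUnion₂.1 hv
  exact hwalk ⟨w₀, hw₀⟩ ⟨w, hw⟩ (ht.preconnected _ _).some u₀ hu₀ v hvw

lemma HasMinor.trans {K : SimpleGraph X} (h₁ : G.HasMinor H) (h₂ : H.HasMinor K) :
    G.HasMinor K := by
  obtain ⟨f, hne, hconn, hdisj, hadj⟩ := h₁
  obtain ⟨g, hne', hconn', hdisj', hadj'⟩ := h₂
  refine ⟨fun x => ⋃ w ∈ g x, f w, fun x => ?_,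
    fun x => induce_biUnion_connected (hconn' x) (fun w _ => hconn w) fun w₁ _ w₂ _ => hadj w₁ w₂,
    fun x₁ x₂ hx => ?_, fun x₁ x₂ hx => ?_⟩
  · obtain ⟨w, hw⟩ := hne' x
    obtain ⟨v, hv⟩ := hne w
    exact ⟨v, Set.mem_biUnion hw hv⟩
  · simp only [Set.disjoint_iUnion₂_left, Set.disjoint_iUnion₂_right]
    exact fun w₂ hw₂ w₁ hw₁ =>
      hdisj w₁ w₂ fun h => Set.disjoint_left.1 (hdisj' x₁ x₂ hx) hw₁ (h ▸ hw₂)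
  · obtain ⟨w₁, hw₁, w₂, hw₂, hw⟩ := hadj' x₁ x₂ hx
    obtain ⟨v₁, hv₁, v₂, hv₂, hv⟩ := hadj w₁ w₂ hw
    exact ⟨v₁, Set.mem_biUnion hw₁ hv₁, v₂, Set.mem_biUnion hw₂ hv₂, hv⟩

lemma induce_singleton_connected (v : V) : (G.induce {v}).Connected := by
  rw [induce_singleton_eq_top]
  exact connected_top

lemma IsContained.hasMinor (h : H ⊑ G) : G.HasMinor H := by
  obtain ⟨φ⟩ := h
  exact ⟨fun w => {φ w}, fun w => Set.singleton_nonempty _, fun w => induce_singleton_connected _,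
    fun w₁ w₂ hw => Set.disjoint_singleton.2 (φ.injective.ne hw),
    fun w₁ w₂ hw => ⟨φ w₁, rfl, φ w₂, rfl, φ.toHom.map_adj hw⟩⟩

lemma eq_top_of_forall_card_sub_one_le_degree [Fintype V] [DecidableRel G.Adj]
    (h : ∀ v, Fintype.card V - 1 ≤ G.degree v) : G = ⊤ := by
  classical
  ext u v
  refine ⟨Adj.ne, fun huv => by_contra fun hn => ?_⟩
  have hpos : 0 < Gᶜ.degree u :=
    (degree_pos_iff_exists_adj _ _).2 ⟨v, (compl_adj G u v).2 ⟨huv, hn⟩⟩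
  have := G.degree_compl (v := u)
  have := h u
  omega

lemma hasMinor_completeGraph_of_le_degree [Fintype V] [DecidableRel G.Adj] {k : ℕ}
    (hV : Fintype.card V = k) (h : ∀ v, k - 1 ≤ G.degree v) :
    G.HasMinor (completeGraph (Fin k)) := by
  subst hV
  rw [eq_top_of_forall_card_sub_one_le_degree h]
  exact (isContained_top_iff.2 ⟨(Fintype.equivFin V).symm.toEmbedding⟩).hasMinor

lemma induce_image_val_connected {s : Set V} {t : Set s} (h : ((G.induce s).induce t).Connected) :
    (G.induce (Subtype.val '' t)).Connected :=
  h.map ⟨fun a => ⟨a.1.1, a.1, a.2, rfl⟩, fun hab => hab⟩ (by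
    rintro ⟨_, a, ha, rfl⟩
    exact ⟨⟨a, ha⟩, rfl⟩)

lemma HasMinor.completeGraph_succ_of_induce_neighborSet {v : V} {k : ℕ}
    (h : (G.induce (G.neighborSet v)).HasMinor (completeGraph (Fin k))) :
    G.HasMinor (completeGraph (Fin (k + 1))) := by
  obtain ⟨f, hne, hconn, hdisj, hadj⟩ := h
  have hv : ∀ i, v ∉ Subtype.val '' f i := by
    rintro i ⟨b, -, hb⟩
    exact G.irrefl (hb ▸ b.2)
  have hnbr : ∀ i, ∃ b ∈ Subtype.val '' f i, G.Adj v b := fun i =>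
    let ⟨b, hb⟩ := hne i
    ⟨b, ⟨b, hb, rfl⟩, b.2⟩
  refine ⟨Fin.cons {v} fun i => Subtype.val '' f i, fun i => ?_, fun i => ?_,
    fun i j hij => ?_, fun i j hij => ?_⟩
  · cases i using Fin.cases
    · exact Set.singleton_nonempty v
    · exact (hne _).image _
  · cases i using Fin.cases
    · exact induce_singleton_connected v
    · exact induce_image_val_connected (hconn _)
  · rcases Fin.eq_zero_or_eq_succ i with rfl | ⟨i, rfl⟩ <;>
      rcases Fin.eq_zero_or_eq_succ j with rfl | ⟨j, rfl⟩ <;>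
      simp only [Fin.cons_zero, Fin.cons_succ, Set.disjoint_singleton_left,
        Set.disjoint_singleton_right]
    · exact absurd rfl hij
    · exact hv j
    · exact hv i
    · exact (Set.disjoint_image_iff Subtype.val_injective).2
        (hdisj i j fun h => hij (congrArg Fin.succ h))
  · rcases Fin.eq_zero_or_eq_succ i with rfl | ⟨i, rfl⟩ <;>
      rcases Fin.eq_zero_or_eq_succ j with rfl | ⟨j, rfl⟩ <;>
      simp only [Fin.cons_zero, Fin.cons_succ, Set.mem_singleton_iff, exists_eq_left]
    · exact absurd rfl hij.ne
    · exact hnbr j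
    · obtain ⟨b, hb, hvb⟩ := hnbr i
      exact ⟨b, hb, hvb.symm⟩
    · obtain ⟨b₁, hb₁, b₂, hb₂, hb⟩ := hadj i j fun h => hij.ne (congrArg Fin.succ h)
      exact ⟨b₁, ⟨b₁, hb₁, rfl⟩, b₂, ⟨b₂, hb₂, rfl⟩, hb⟩

end Minor

/-- The contraction of the edge `xy`: `y` is deleted and its neighbours are joined to `x`, which
stands for the merged vertex. -/
def contractEdge (G : SimpleGraph V) (x y : V) : SimpleGraph ({y}ᶜ : Set V) :=
  G.induce {y}ᶜ ⊔ fromRel fun a b => (a : V) = x ∧ G.Adj y b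

lemma induce_compl_singleton_le_contractEdge (G : SimpleGraph V) (x y : V) :
    G.induce {y}ᶜ ≤ G.contractEdge x y :=
  le_sup_left

lemma hasMinor_contractEdge {G : SimpleGraph V} {x y : V} (hxy : G.Adj x y) :
    G.HasMinor (G.contractEdge x y) := by
  refine ⟨fun a => {u | u = a ∨ u = y ∧ (a : V) = x}, fun a => ⟨a, Or.inl rfl⟩, fun a => ?_,
    fun a b hab => Set.disjoint_left.2 ?_, fun a b hab => ?_⟩
  · dsimp only
    by_cases ha : (a : V) = x
    · have hpair : {u | u = (a : V) ∨ u = y ∧ (a : V) = x} = {x, y} := by ext; simp [ha]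
      rw [hpair]
      exact induce_pair_connected_of_adj hxy
    · have hsingle : {u | u = (a : V) ∨ u = y ∧ (a : V) = x} = {(a : V)} := by ext; simp [ha]
      rw [hsingle]
      exact induce_singleton_connected _
  · rintro u (rfl | ⟨rfl, hax⟩) (hub | ⟨hub, hbx⟩)
    · exact hab (Subtype.ext hub)
    · exact a.2 hub
    · exact b.2 hub.symm
    · exact hab (Subtype.ext (hax.trans hbx.symm))
  · rcases hab with hab | ⟨-, ⟨hax, hyb⟩ | ⟨hbx, hya⟩⟩
    · exact ⟨a, Or.inl rfl, b, Or.inl rfl, hab⟩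
    · exact ⟨y, Or.inr ⟨rfl, hax⟩, b, Or.inl rfl, hyb⟩
    · exact ⟨a, Or.inl rfl, y, Or.inr ⟨rfl, hbx⟩, hya.symm⟩

lemma ncard_edgeSet_eq_card_edgeFinset (G : SimpleGraph V) [Fintype G.edgeSet] :
    G.edgeSet.ncard = #G.edgeFinset := by
  rw [← coe_edgeFinset, Set.ncard_coe_finset]

lemma exists_le_ncard_edgeSet_eq (G : SimpleGraph V) {k : ℕ} (hk : k ≤ G.edgeSet.ncard) :
    ∃ G' ≤ G, G'.edgeSet.ncard = k := by
  obtain ⟨s, hs, rfl⟩ := Set.exists_subset_card_eq hk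
  refine ⟨G.deleteEdges (G.edgeSet \ s), G.deleteEdges_le _, ?_⟩
  rw [edgeSet_deleteEdges, Set.sdiff_sdiff_cancel_left hs]

section Counting

variable [Fintype V] [DecidableEq V] (G : SimpleGraph V) [DecidableRel G.Adj]

lemma card_edgeFinset_le_induce_compl_singleton (v : V) :
    #G.edgeFinset ≤ #(G.induce {v}ᶜ).edgeFinset + G.degree v := by
  rw [card_edgeFinset_induce_compl_singleton, card_edgeFinset_deleteIncidenceSet]
  omega

lemma card_edgeFinset_le_contractEdge {x y : V} (hxy : G.Adj x y)
    [DecidableRel (G.contractEdge x y).Adj] :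
    #G.edgeFinset ≤
      #(G.contractEdge x y).edgeFinset + #(G.neighborFinset x ∩ G.neighborFinset y) + 1 := by
  set x' : ({y}ᶜ : Set V) := ⟨x, hxy.ne⟩
  -- the neighbours of `y` that become new neighbours of `x`
  let N : Finset ({y}ᶜ : Set V) := {b | G.Adj y b ∧ b ≠ x' ∧ ¬ G.Adj x b}
  have hdeg : G.degree y ≤ #(G.neighborFinset x ∩ G.neighborFinset y) + 1 + #N := by
    rw [← card_neighborFinset_eq_degree]
    calc _ ≤ #(insert x (G.neighborFinset x ∩ G.neighborFinset y) ∪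
            N.map (Function.Embedding.subtype _)) := card_le_card fun b hb => ?_
      _ ≤ _ := (card_union_le _ _).trans (by rw [card_map]; gcongr; exact card_insert_le _ _)
    rw [mem_neighborFinset] at hb
    by_cases hbx : b = x
    · simp [hbx]
    by_cases hxb : G.Adj x b
    · simp [hxb, hb]
    refine mem_union_right _ (mem_map.2 ⟨⟨b, hb.ne'⟩, ?_, rfl⟩)
    simpa [N, x', hb, hxb] using fun h => hbx (congrArg Subtype.val h)
  have hnew : #(G.induce {y}ᶜ).edgeFinset + #N ≤ #(G.contractEdge x y).edgeFinset := by
    have hle := edgeFinset_mono (G.induce_compl_singleton_le_contractEdge x y)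
    have hN : #N ≤ #((G.contractEdge x y).edgeFinset \ (G.induce {y}ᶜ).edgeFinset) := by
      refine card_le_card_of_injOn (fun b => s(x', b)) (fun b hb => ?_)
        fun b _ b' _ h => Sym2.congr_right.1 h
      simp only [N, coe_filter, mem_univ, true_and, Set.mem_ofPred_eq] at hb
      simp only [coe_sdiff, Set.mem_sdiff, mem_coe, mem_edgeFinset, mem_edgeSet]
      exact ⟨Or.inr ⟨hb.2.1.symm, Or.inl ⟨rfl, hb.1⟩⟩, hb.2.2⟩
    rw [card_sdiff_of_subset hle] at hN
    have := card_le_card hle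
    omega
  have := G.card_edgeFinset_le_induce_compl_singleton y
  omega

lemma card_inter_neighborFinset_le_degree_induce (v : V) (u : G.neighborSet v) :
    #(G.neighborFinset u ∩ G.neighborFinset v) ≤ (G.induce (G.neighborSet v)).degree u := by
  rw [← card_neighborFinset_eq_degree, ← card_map (Function.Embedding.subtype _)]
  refine card_le_card fun c hc => ?_
  rw [mem_inter, mem_neighborFinset, mem_neighborFinset] at hc
  exact mem_map.2 ⟨⟨c, hc.2⟩, (mem_neighborFinset _ _ _).2 hc.1, rfl⟩

lemma exists_small_degree_or_sparse_edge_or_dense_neighborhood {j : ℕ}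
    (hE : #G.edgeFinset < j * Fintype.card V) :
    (∃ v, G.degree v ≤ j) ∨
      (∃ x y, G.Adj x y ∧ #(G.neighborFinset x ∩ G.neighborFinset y) + 1 ≤ j) ∨
      ∃ v, j < G.degree v ∧ G.degree v < 2 * j ∧
        ∀ u, j ≤ (G.induce (G.neighborSet v)).degree u := by
  by_contra! h
  obtain ⟨hdeg, hedge, hnbhd⟩ := h
  obtain ⟨v, -, hv⟩ : ∃ v ∈ univ, G.degree v < 2 * j := by
    refine exists_lt_of_sum_lt ?_
    rw [sum_degrees_eq_twice_card_edges, sum_const, card_univ, smul_eq_mul]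
    nlinarith
  obtain ⟨u, hu⟩ := hnbhd v (hdeg v) hv
  have := G.card_inter_neighborFinset_le_degree_induce v u
  have := hedge u v (G.adj_symm u.2)
  omega

end Counting

universe u

/-- Mader's bound for `K_p` minors, with `q = p - 2`, reduced to the neighbourhood graphs
described by `hlocal`. -/
theorem hasMinor_completeGraph_of_card_edgeSet {q : ℕ} (hq : 2 ≤ q)
    (hlocal : ∀ (W : Type u) [Fintype W] (H : SimpleGraph W) [DecidableRel H.Adj],
      q < Fintype.card W → Fintype.card W < 2 * q → (∀ w, q ≤ H.degree w) →
      H.HasMinor (completeGraph (Fin (q + 1))))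
    {V : Type u} [Fintype V] (G : SimpleGraph V) (hV : q < Fintype.card V)
    (hE : q * Fintype.card V < G.edgeSet.ncard + (q + 1).choose 2) :
    G.HasMinor (completeGraph (Fin (q + 2))) := by
  classical
  induction hcard : Fintype.card V using Nat.strong_induction_on generalizing V with
  | _ n ih =>
  have hchoose : (q + 1).choose 2 * 2 = (q + 1) * q := by
    simpa using (Nat.add_one_mul_choose_eq q 1).symm
  have hchoose3 : 3 ≤ (q + 1).choose 2 := Nat.choose_le_choose 2 (by omega : 3 ≤ q + 1)
  have hmax := G.card_edgeFinset_le_card_choose_two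
  rw [hcard] at hV hE hmax
  rw [ncard_edgeSet_eq_card_edgeFinset] at hE
  -- a graph on `q + 1` vertices has at most `(q + 1).choose 2 = q (q + 1) - (q + 1).choose 2` edges
  obtain rfl | hn : n = q + 1 ∨ q + 1 < n := by omega
  · exfalso
    nlinarith
  -- trimming to one edge above the bound makes the average degree less than `2 q`
  obtain ⟨G₀, hle, hG₀⟩ :=
    G.exists_le_ncard_edgeSet_eq (k := q * n + 1 - (q + 1).choose 2) (by
      rw [ncard_edgeSet_eq_card_edgeFinset]; omega)
  refine (IsContained.of_le hle).hasMinor.trans ?_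
  have hmul : q * (n - 1) + q = q * n := by
    rw [← Nat.mul_succ, Nat.succ_eq_add_one, Nat.sub_add_cancel (by omega)]
  rw [ncard_edgeSet_eq_card_edgeFinset] at hG₀
  have hcompl (v : V) : Fintype.card ({v}ᶜ : Set V) = n - 1 := by
    rw [Fintype.card_compl_set, ← hcard]; simp
  rcases G₀.exists_small_degree_or_sparse_edge_or_dense_neighborhood (j := q) (by
      rw [hcard]; omega) with ⟨v, hv⟩ | ⟨x, y, hxy, hcommon⟩ | ⟨v, hv, hv', hdeg⟩
  · have := G₀.card_edgeFinset_le_induce_compl_singleton v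
    refine (Copy.induce G₀ {v}ᶜ).isContained.hasMinor.trans ?_
    exact ih (n - 1) (by omega) (G₀.induce {v}ᶜ) (by rw [hcompl]; omega)
      (by rw [ncard_edgeSet_eq_card_edgeFinset, hcompl]; omega) (hcompl v)
  · have := G₀.card_edgeFinset_le_contractEdge hxy
    refine (hasMinor_contractEdge hxy).trans ?_
    exact ih (n - 1) (by omega) (G₀.contractEdge x y) (by rw [hcompl]; omega)
      (by rw [ncard_edgeSet_eq_card_edgeFinset, hcompl]; omega) (hcompl y)
  · rw [← card_neighborSet_eq_degree] at hv hv'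
    exact (hlocal _ _ hv hv' hdeg).completeGraph_succ_of_induce_neighborSet

theorem hasMinor_completeGraph_four_of_card_edgeSet {V : Type u} [Fintype V] (G : SimpleGraph V)
    (hV : 2 < Fintype.card V) (hE : 2 * Fintype.card V < G.edgeSet.ncard + 3) :
    G.HasMinor (completeGraph (Fin 4)) :=
  hasMinor_completeGraph_of_card_edgeSet le_rfl (fun _ _ _ _ hW hW' hdeg =>
    hasMinor_completeGraph_of_le_degree (by omega) fun w => (hdeg w).trans' (by omega)) G hV hE

theorem hasMinor_completeGraph_five_of_card_edgeSet {V : Type u} [Fintype V] (G : SimpleGraph V)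
    (hV : 3 < Fintype.card V) (hE : 3 * Fintype.card V < G.edgeSet.ncard + 6) :
    G.HasMinor (completeGraph (Fin 5)) := by
  refine hasMinor_completeGraph_of_card_edgeSet (q := 3) (by norm_num)
    (fun W _ H _ hW hW' hdeg => ?_) G hV hE
  obtain hW | hW : Fintype.card W = 4 ∨ Fintype.card W = 5 := by omega
  · exact hasMinor_completeGraph_of_le_degree hW fun w => (hdeg w).trans' (by omega)
  · have hsum : Fintype.card W * 3 ≤ 2 * #H.edgeFinset := by
      rw [← sum_degrees_eq_twice_card_edges, ← smul_eq_mul, ← card_univ]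
      exact card_nsmul_le_sum _ _ _ fun w _ => hdeg w
    refine hasMinor_completeGraph_four_of_card_edgeSet H (by omega) ?_
    rw [ncard_edgeSet_eq_card_edgeFinset]
    omega

end SimpleGraph

theorem mader_K5 {V : Type*} [Fintype V] (G : SimpleGraph V) (n : ℕ)
    (hn : n = Fintype.card V) (hn4 : 4 ≤ n)
    (hminor : ¬ G.HasMinor (completeGraph (Fin 5))) :
    G.edgeSet.ncard ≤ 3 * n - 6 := by
  subst hn
  by_contra! hE
  exact hminor (G.hasMinor_completeGraph_five_of_card_edgeSet (by omega) (by omega))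
end
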